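/- Define D(m) = ∑_{i=−1}^{m−2} t_i t_{m−i−2}. Then D satisfies D(m) = D(m−3) + D(m−2) + D(m−1) + t_{m−1} for all m ≥ 4, where t are the Tribonacci numbers with t_{−2}=0, t_{−1}=t_0=1. -/

import Mathlib

/-- Tribonacci numbers shifted: `trib (m+2) = t_m` where `t_{-2}=0`, `t_{-1}=t_0=1`,
`t_m = t_{m-1} + t_{m-2} + t_{m-3}`. -/
def trib : ℕ → ℕ
  | 0 => 0
  | 1 => 1
  | 2 => 1
  | n + 3 => trib (n + 2) + trib (n + 1) + trib n

/-- `D m = ∑_{i=-1}^{m-2} t_i t_{m-i-2}` (with `t_i = trib (i+2)`). -/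
def D (m : ℕ) : ℕ :=
  ∑ j ∈ Finset.range m, trib (j + 1) * trib (m - j + 1)

/-! `D` is the convolution of `j ↦ trib (j + 1)` with the Tribonacci numbers. For any sequence `g`,
splitting off the last three terms of `tribConv g (n + 3)` and expanding `trib` by its recurrence in
the others leaves the three shorter convolutions plus boundary terms adding up to
`g n + g (n + 1) + g (n + 2)`; for `g = trib (· + 1)` this is `trib (n + 4)`. -/

open Finset

lemma trib_add_three (n : ℕ) : trib (n + 3) = trib (n + 2) + trib (n + 1) + trib n := rfl

section Convolution

variable {R : Type*} [CommSemiring R]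

def tribConv (g : ℕ → R) (m : ℕ) : R :=
  ∑ j ∈ range m, g j * trib (m - j + 1)

theorem tribConv_add_three (g : ℕ → R) (n : ℕ) :
    tribConv g (n + 3) =
      tribConv g (n + 2) + tribConv g (n + 1) + tribConv g n + (g n + g (n + 1) + g (n + 2)) := by
  have hsub (c j : ℕ) (hj : j ∈ range (n + 1)) : n + c - j = n - j + c :=
    Nat.sub_add_comm (Nat.lt_succ_iff.mp (mem_range.mp hj))
  have h3 : tribConv g (n + 3) =
      ∑ j ∈ range (n + 1), g j * (trib (n - j + 1 + 3) : R) + g (n + 1) * 2 + g (n + 2) := by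
    rw [tribConv, sum_range_succ, sum_range_succ, show n + 3 - (n + 1) + 1 = 3 by omega,
      show n + 3 - (n + 2) + 1 = 2 by omega,
      sum_congr rfl fun j hj => by rw [hsub 3 j hj, add_right_comm]]
    norm_num [trib]
  have h2 : tribConv g (n + 2) =
      ∑ j ∈ range (n + 1), g j * (trib (n - j + 1 + 2) : R) + g (n + 1) := by
    rw [tribConv, sum_range_succ, show n + 2 - (n + 1) + 1 = 2 by omega,
      sum_congr rfl fun j hj => by rw [hsub 2 j hj, add_right_comm]]
    norm_num [trib]
  have h1 : tribConv g (n + 1) = ∑ j ∈ range (n + 1), g j * (trib (n - j + 1 + 1) : R) :=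
    sum_congr rfl fun j hj => by rw [hsub 1 j hj]
  have h0 : tribConv g n + g n = ∑ j ∈ range (n + 1), g j * (trib (n - j + 1) : R) := by
    simp [tribConv, sum_range_succ, trib]
  have hsplit : ∑ j ∈ range (n + 1), g j * (trib (n - j + 1 + 3) : R) =
      ∑ j ∈ range (n + 1), g j * (trib (n - j + 1 + 2) : R) +
        ∑ j ∈ range (n + 1), g j * (trib (n - j + 1 + 1) : R) +
        ∑ j ∈ range (n + 1), g j * (trib (n - j + 1) : R) := by
    rw [← sum_add_distrib, ← sum_add_distrib]
    refine sum_congr rfl fun j _ => ?_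
    rw [trib_add_three]
    push_cast
    ring
  rw [h3, hsplit, h2, h1, ← h0]
  ring

end Convolution

lemma D_eq_tribConv : D = tribConv fun j => trib (j + 1) := by
  ext m
  simp [D, tribConv]

/-- For all `m ≥ 4`, `D m = D (m-3) + D (m-2) + D (m-1) + t_{m-1}`. -/
theorem D_recurrence (m : ℕ) (hm : 4 ≤ m) :
    D m = D (m - 3) + D (m - 2) + D (m - 1) + trib (m + 1) := by
  obtain ⟨n, rfl⟩ : ∃ n, m = n + 3 := ⟨m - 3, by omega⟩
  rw [show n + 3 - 2 = n + 1 by omega, show n + 3 - 1 = n + 2 by omega, Nat.add_sub_cancel,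
    D_eq_tribConv, tribConv_add_three, trib_add_three (n + 1)]
  ring
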